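/- Let A > 0 and λ = (λ₁,...,λₙ) ∈ Γ₂ with λ₁ ≥ ... ≥ λₙ and σ₃(λ) ≥ −A. If λ₁^{3/2} > 6(n−2)√A, then there exists a constant C depending only on n, A and σ₂(λ) such that |λⱼ| ≤ C·λ₁^{−1/2} for every j ∈ {2,...,n}. -/
import Mathlib


open Finset

noncomputable def s1 {n : ℕ} (x : Fin n → ℝ) : ℝ := ∑ i, x i

noncomputable def s2 {n : ℕ} (x : Fin n → ℝ) : ℝ :=
  ((∑ i, x i) ^ 2 - ∑ i, (x i) ^ 2) / 2

noncomputable def s3 {n : ℕ} (x : Fin n → ℝ) : ℝ :=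
  ((∑ i, x i) ^ 3 - 3 * (∑ i, x i) * (∑ i, (x i) ^ 2) + 2 * ∑ i, (x i) ^ 3) / 6

def Gamma2 {n : ℕ} : Set (Fin n → ℝ) := {x | 0 < s1 x ∧ 0 < s2 x}

def Gamma3 {n : ℕ} : Set (Fin n → ℝ) := {x | 0 < s1 x ∧ 0 < s2 x ∧ 0 < s3 x}

noncomputable def myB (A S : ℝ) : ℝ := 2*S + 6*A
noncomputable def myD (A S : ℝ) : ℝ := (myB A S)^2 + 2*(myB A S)
noncomputable def myE (A S : ℝ) : ℝ := 4*A + (myB A S)^3 + 2*(myB A S)^2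
noncomputable def myT (n : ℕ) (A S : ℝ) : ℝ :=
  1 + Real.sqrt (6*S) + 2*(myB A S + n*Real.sqrt (myD A S))

set_option maxHeartbeats 2000000 in
lemma aux9 (n : ℕ) (hn : 2 ≤ n) (A S : ℝ) (hA : 0 < A) (l : Fin n → ℝ) (z : Fin n)
    (hzle : ∀ i, l i ≤ l z) (hp1pos : 0 < s1 l) (hS2 : s2 l = S) (hS : 0 < S)
    (hs3 : -A ≤ s3 l) (j : Fin n) (hj : j ≠ z) :
    |l j| ≤ ((n : ℝ) * myT n A S * Real.sqrt (myT n A S) + Real.sqrt (myE A S)) *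
      (l z) ^ (-(1:ℝ)/2) := by
  set t := l z with htdef
  set B := myB A S with hBdef
  set D := myD A S with hDdef
  set E := myE A S with hEdef
  set t1 := myT n A S with ht1def
  have hB_eq : B = 2*S + 6*A := by rw [hBdef, myB]
  have hD_eq : D = B^2 + 2*B := by rw [hDdef, hBdef, myD]
  have hE_eq : E = 4*A + B^3 + 2*B^2 := by rw [hEdef, hBdef, myE]
  have ht1_eq : t1 = 1 + Real.sqrt (6*S) + 2*(B + n*Real.sqrt D) := by
    rw [ht1def, hBdef, hDdef, myT]
  have hBpos : 0 < B := by rw [hB_eq]; linarith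
  have hn2 : (2:ℝ) ≤ (n:ℝ) := by exact_mod_cast hn
  have hsqrtD0 : 0 ≤ Real.sqrt D := Real.sqrt_nonneg _
  have hsqrtE0 : 0 ≤ Real.sqrt E := Real.sqrt_nonneg _
  have hsqrt6S0 : 0 ≤ Real.sqrt (6*S) := Real.sqrt_nonneg _
  have hnD0 : 0 ≤ (n:ℝ) * Real.sqrt D := mul_nonneg (by linarith) hsqrtD0
  have ht1ge1 : 1 ≤ t1 := by rw [ht1_eq]; linarith
  set e := Finset.univ.erase z with hedef
  have hzmem : z ∈ (Finset.univ : Finset (Fin n)) := Finset.mem_univ z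
  have hjmem : j ∈ e := Finset.mem_erase.mpr ⟨hj, Finset.mem_univ j⟩
  set m := ∑ i ∈ e, l i with hmdef
  set Q := ∑ i ∈ e, (l i)^2 with hQdef
  set R := ∑ i ∈ e, (l i)^3 with hRdef
  have hp1 : ∑ i, l i = m + t := (Finset.sum_erase_add _ _ hzmem).symm
  have hp2 : ∑ i, (l i)^2 = Q + t^2 := (Finset.sum_erase_add _ _ hzmem).symm
  have hp3 : ∑ i, (l i)^3 = R + t^3 := (Finset.sum_erase_add _ _ hzmem).symm
  have hQ0 : 0 ≤ Q := Finset.sum_nonneg fun i _ => sq_nonneg _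
  have hsqQ : ∀ i ∈ e, (l i)^2 ≤ Q := fun i hi =>
    Finset.single_le_sum (fun k _ => sq_nonneg (l k)) hi
  have habs : ∀ i ∈ e, |l i| ≤ Real.sqrt Q := fun i hi => by
    rw [← Real.sqrt_sq_eq_abs]; exact Real.sqrt_le_sqrt (hsqQ i hi)
  have hS2' : (m+t)^2 - (Q + t^2) = 2*S := by
    have h := hS2; simp only [s2] at h; rw [hp1, hp2] at h; linarith
  have hs3'6 : -(6*A) ≤ (m+t)^3 - 3*((m+t)*(Q+t^2)) + 2*(R+t^3) := by
    have h := hs3; simp only [s3] at h; rw [hp1, hp2, hp3] at h; linarith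
  have hptle : m + t ≤ n * t := by
    rw [← hp1]
    calc ∑ i, l i ≤ ∑ _i : Fin n, t := Finset.sum_le_sum fun i _ => hzle i
      _ = n * t := by simp [Finset.sum_const, Finset.card_univ, nsmul_eq_mul]
  have hp1pos' : 0 < m + t := by
    have h := hp1pos; simp only [s1] at h; rw [hp1] at h; exact h
  have ht : 0 < t := by
    by_contra hcon
    push_neg at hcon
    have h1 : (n:ℝ) * t ≤ 0 := mul_nonpos_iff.mpr (Or.inl ⟨by linarith, hcon⟩)
    linarith
  have hcubel : ∀ i, (l i)^3 ≤ t * (l i)^2 := fun i => by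
    linarith [mul_nonneg (sub_nonneg.mpr (hzle i)) (sq_nonneg (l i))]
  have hp3le : R + t^3 ≤ t * (Q + t^2) := by
    rw [← hp3, ← hp2, Finset.mul_sum]
    exact Finset.sum_le_sum fun i _ => hcubel i
  -- each tail entry is at most m + (n-2)√Q
  have hgen : ∀ i ∈ e, l i ≤ m + ((n:ℝ)-2) * Real.sqrt Q := by
    intro i hi
    have hie : e.erase i ⊆ e := Finset.erase_subset _ _
    have hsum : ∑ k ∈ e.erase i, l k + l i = m := Finset.sum_erase_add _ _ hi
    have hcard2 : (((e.erase i).card : ℕ) : ℝ) = (n:ℝ) - 2 := by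
      rw [Finset.card_erase_of_mem hi, hedef, Finset.card_erase_of_mem hzmem,
        Finset.card_univ, Fintype.card_fin]
      have hmk : n - 1 - 1 = n - 2 := by omega
      rw [hmk, Nat.cast_sub hn]
      norm_num
    have hbound : -(((n:ℝ)-2) * Real.sqrt Q) ≤ ∑ k ∈ e.erase i, l k := by
      have h1 : ∀ k ∈ e.erase i, -Real.sqrt Q ≤ l k := fun k hk =>
        (abs_le.mp (habs k (hie hk))).1
      calc -(((n:ℝ)-2) * Real.sqrt Q)
          = ∑ _k ∈ e.erase i, (-Real.sqrt Q) := by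
            rw [Finset.sum_const, nsmul_eq_mul, hcard2]; ring
        _ ≤ ∑ k ∈ e.erase i, l k := Finset.sum_le_sum h1
    linarith
  -- generic cube-sum bound
  have hcgen : ∀ c : ℝ, 0 ≤ c → (∀ i ∈ e, l i ≤ c) → R ≤ c * Q := by
    intro c hc0 hc
    calc R ≤ ∑ i ∈ e, c * (l i)^2 := by
          apply Finset.sum_le_sum
          intro i hi
          rcases le_or_gt (l i) 0 with h | h
          · linarith [mul_nonneg hc0 (sq_nonneg (l i)),
              mul_nonpos_of_nonpos_of_nonneg h (sq_nonneg (l i))]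
          · linarith [mul_le_mul_of_nonneg_right (hc i hi) (sq_nonneg (l i))]
      _ = c * Q := (Finset.mul_sum _ _ _).symm
  have hljQ : (l j)^2 ≤ Q := hsqQ j hjmem
  -- make everything opaque
  clear_value t B D E t1 e m Q R
  clear hzle hS2 hs3 hp1pos hcubel hsqQ habs hp1 hp2 hp3 hzmem hjmem
  have hm0 : 0 < m := by
    by_contra hcon
    push_neg at hcon
    have h1 : m + t ≤ t := by linarith
    have h2 : (m+t)^2 ≤ t^2 := pow_le_pow_left₀ hp1pos'.le h1 2
    linarith
  have hst : 0 < Real.sqrt t := Real.sqrt_pos.mpr ht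
  have hrp : t ^ (-(1:ℝ)/2) = (Real.sqrt t)⁻¹ := by
    rw [neg_div, Real.rpow_neg ht.le, ← Real.sqrt_eq_rpow]
  rw [hrp]
  rcases le_or_gt t t1 with hc | hc
  · -- small t case
    have habsj : |l j| ≤ m + t := by
      rw [← Real.sqrt_sq_eq_abs]
      have h1 : (l j)^2 ≤ (m+t)^2 := by linarith [hljQ, hS2', hS, sq_nonneg t]
      calc Real.sqrt ((l j)^2) ≤ Real.sqrt ((m+t)^2) := Real.sqrt_le_sqrt h1
        _ = m + t := Real.sqrt_sq hp1pos'.le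
    have hst1 : 0 < Real.sqrt t1 := Real.sqrt_pos.mpr (by linarith)
    have hinv : (Real.sqrt t1)⁻¹ ≤ (Real.sqrt t)⁻¹ :=
      inv_anti₀ hst (Real.sqrt_le_sqrt hc)
    have hnt10 : 0 ≤ (n:ℝ) * t1 * Real.sqrt t1 :=
      mul_nonneg (mul_nonneg (by linarith) (by linarith)) hst1.le
    calc |l j| ≤ m + t := habsj
      _ ≤ n * t := hptle
      _ ≤ n * t1 := mul_le_mul_of_nonneg_left hc (by linarith)
      _ = ((n:ℝ) * t1 * Real.sqrt t1) * (Real.sqrt t1)⁻¹ := by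
          field_simp
      _ ≤ ((n:ℝ) * t1 * Real.sqrt t1) * (Real.sqrt t)⁻¹ :=
          mul_le_mul_of_nonneg_left hinv hnt10
      _ ≤ ((n:ℝ) * t1 * Real.sqrt t1 + Real.sqrt E) * (Real.sqrt t)⁻¹ := by
          apply mul_le_mul_of_nonneg_right _ (inv_nonneg.mpr hst.le)
          linarith
  · -- large t case
    have ht1 : (1:ℝ) ≤ t := by linarith
    have hsqrt6S : Real.sqrt (6*S) ≤ t := by
      have h : Real.sqrt (6*S) ≤ t1 := by rw [ht1_eq]; linarith
      linarith
    have h6S : 6*S ≤ t^2 := by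
      have h0 : (0:ℝ) ≤ 6*S := by linarith
      have h1 := Real.mul_self_sqrt h0
      have h2 := mul_self_le_mul_self hsqrt6S0 hsqrt6S
      nlinarith [h1, h2]
    have hQt : Q + t^2 = (m+t)^2 - 2*S := by linarith
    have hp3le' : R + t^3 ≤ t*((m+t)^2 - 2*S) := by rw [← hQt]; exact hp3le
    have k1 : m*(m+t)^2 ≤ 3*A + 3*S*m + S*t := by
      have h := hs3'6
      rw [hQt] at h
      linarith [h, hp3le']
    have c1 : m*t^2 ≤ m*(m+t)^2 := by
      linarith [mul_nonneg (mul_nonneg hm0.le hm0.le) ht.le,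
        mul_nonneg (mul_nonneg hm0.le hm0.le) hm0.le]
    have c2 : 3*S*m ≤ (1/2)*(m*t^2) := by
      have h := mul_le_mul_of_nonneg_left h6S hm0.le
      linarith [h]
    have k2 : m*t^2 ≤ 6*A + 2*S*t := by linarith
    have hmt : m*t ≤ B := by
      rw [hB_eq]
      by_contra hcon
      push_neg at hcon
      have h1 : (m*t - 2*S)*1 ≤ (m*t - 2*S)*t :=
        mul_le_mul_of_nonneg_left ht1 (by linarith)
      linarith [h1, k2, hcon]
    have hmB : m ≤ B := by
      have h := mul_le_mul_of_nonneg_left ht1 hm0.le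
      linarith [h, hmt]
    have hQeq : Q = m^2 + 2*(m*t) - 2*S := by linarith [hS2']
    have hQD : Q ≤ D := by
      rw [hD_eq]
      have h := mul_self_le_mul_self hm0.le hmB
      linarith [h, hQeq, hmt, hS]
    have hsQD : Real.sqrt Q ≤ Real.sqrt D := Real.sqrt_le_sqrt hQD
    set W := m + ((n:ℝ) - 2) * Real.sqrt D with hWdef
    clear_value W
    have hW0 : 0 ≤ W := by
      have := mul_nonneg (by linarith : (0:ℝ) ≤ (n:ℝ)-2) hsqrtD0
      rw [hWdef]; linarith
    have hliW : ∀ i ∈ e, l i ≤ W := by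
      intro i hi
      have h1 := hgen i hi
      have h2 : ((n:ℝ)-2)*Real.sqrt Q ≤ ((n:ℝ)-2)*Real.sqrt D :=
        mul_le_mul_of_nonneg_left hsQD (by linarith)
      rw [hWdef]; linarith
    have hRW : R ≤ W * Q := hcgen W hW0 hliW
    have hmQ : 0 ≤ m * Q := mul_nonneg hm0.le hQ0
    have hWt : 4*W ≤ 3*t := by
      have h1 : W ≤ B + (n:ℝ)*Real.sqrt D := by rw [hWdef]; linarith [hmB, hsqrtD0]
      have h2 : 2*(B + (n:ℝ)*Real.sqrt D) ≤ t1 := by rw [ht1_eq]; linarith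
      linarith
    have hWQ : 2*(W*Q) ≤ (3/2)*(t*Q) := by
      have h := mul_nonneg (by linarith : (0:ℝ) ≤ 3*t - 4*W) hQ0
      linarith [h]
    have hmain : 3*(t*Q) ≤ 6*A + m^3 + 3*(t*m^2) + (3/2)*(t*Q) := by
      linarith [hs3'6, hRW, hWQ, hmQ]
    have hm3 : m^3 ≤ B^3 := pow_le_pow_left₀ hm0.le hmB 3
    have htm2 : t*m^2 ≤ B^2 := by
      have h1 := mul_le_mul_of_nonneg_right hmt hm0.le
      have h2 := mul_le_mul_of_nonneg_left hmB hBpos.le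
      linarith [h1, h2]
    have hB30 : 0 ≤ B^3 := by positivity
    have htQE : t*Q ≤ E := by rw [hE_eq]; linarith
    have hQE : Q ≤ E/t := by rw [le_div_iff₀ ht]; linarith
    have hE0 : 0 ≤ E := by rw [hE_eq]; linarith [sq_nonneg B, hB30, hA]
    have hnt10 : 0 ≤ (n:ℝ) * t1 * Real.sqrt t1 :=
      mul_nonneg (mul_nonneg (by linarith) (by linarith)) (Real.sqrt_nonneg _)
    calc |l j| = Real.sqrt ((l j)^2) := (Real.sqrt_sq_eq_abs _).symm
      _ ≤ Real.sqrt (E/t) := Real.sqrt_le_sqrt (le_trans hljQ hQE)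
      _ = Real.sqrt E / Real.sqrt t := Real.sqrt_div hE0 t
      _ = Real.sqrt E * (Real.sqrt t)⁻¹ := div_eq_mul_inv _ _
      _ ≤ ((n:ℝ) * t1 * Real.sqrt t1 + Real.sqrt E) * (Real.sqrt t)⁻¹ := by
          apply mul_le_mul_of_nonneg_right _ (inv_nonneg.mpr hst.le)
          linarith

theorem stmt_9 (n : ℕ) (hn : 2 ≤ n) (A S : ℝ) (hA : 0 < A) :
    ∃ C : ℝ, ∀ l : Fin n → ℝ,
      (∀ i j : Fin n, i ≤ j → l j ≤ l i) → l ∈ Gamma2 → s2 l = S →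
      -A ≤ s3 l →
      6 * ((n : ℝ) - 2) * Real.sqrt A < l ⟨0, by omega⟩ ^ ((3 : ℝ) / 2) →
      ∀ j : Fin n, j ≠ ⟨0, by omega⟩ →
        |l j| ≤ C * l ⟨0, by omega⟩ ^ (-(1 : ℝ) / 2) := by
  refine ⟨(n : ℝ) * myT n A S * Real.sqrt (myT n A S) + Real.sqrt (myE A S), ?_⟩
  intro l hord hmem hS2 hs3 _ j hj
  exact aux9 n hn A S hA l _ (fun i => hord _ i (by rw [Fin.le_def]; exact Nat.zero_le _))
    hmem.1 hS2 (hS2 ▸ hmem.2) hs3 j hj
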